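/- Let α < 0 be a real number with f(α) > 0 and f(α) + g(α) = 0 (i.e., α equals the root x1 ≈ −5.46343 of f+g). Then for every length vector L with square count n(L) = n ≥ 3, one has Ψ_α(L) ≤ f(α)·⌊(n−1)/2⌋. Moreover, this bound is attained: if n is odd it is attained by the list (3,3,…,3) with (n−1)/2 entries, and if n is even it is attained both by the list (4,3,3,…,3) with (n−2)/2 entries and by the list (2,3,3,…,3) with n/2 entries. (This corresponds to the second part of Proposition 4: at α = x1 the maximum of χ_α over Ω_n is attained by several non-isomorphic chains.) -/

import Mathlib

noncomputable def f (α : ℝ) : ℝ := 2 * (5:ℝ) ^ α - 6 * (6:ℝ) ^ α + 4 * (7:ℝ) ^ α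
noncomputable def g (α : ℝ) : ℝ := 2 * (6:ℝ) ^ α - (5:ℝ) ^ α - (7:ℝ) ^ α
noncomputable def h (α : ℝ) : ℝ := 5 * (6:ℝ) ^ α - 2 * (5:ℝ) ^ α - 4 * (7:ℝ) ^ α + (8:ℝ) ^ α

/-- A length vector: a nonempty list of segment lengths, each at least 2. -/
def LengthVector (L : List ℕ) : Prop := L ≠ [] ∧ ∀ l ∈ L, 2 ≤ l

/-- Square count of a length vector: `l₁ + ⋯ + l_s − (s − 1)`. -/
def nSq (L : List ℕ) : ℕ := L.sum - (L.length - 1)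

/-- Number of external (first or last) entries equal to 2. -/
def e2 (L : List ℕ) : ℕ :=
  ((Finset.range L.length).filter
    (fun j => (j = 0 ∨ j = L.length - 1) ∧ L.getD j 0 = 2)).card

/-- Number of internal entries (neither first nor last) equal to 2. -/
def i2 (L : List ℕ) : ℕ :=
  ((Finset.range L.length).filter
    (fun j => j ≠ 0 ∧ j ≠ L.length - 1 ∧ L.getD j 0 = 2)).card

/-- The weight Ψ_α(L) = f(α)·s + g(α)·e₂(L) + h(α)·i₂(L). -/
noncomputable def psi (α : ℝ) (L : List ℕ) : ℝ :=
  f α * L.length + g α * e2 L + h α * i2 L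

/-!
At the root of `f + g` we have `g = -f`, while `f + h = 8^α - 6^α < 0` for `α < 0`; hence `h < g`
and `Ψ_α(L) ≤ f(α)·(s - t)`, where `t` counts the entries equal to 2. Each entry `l` adds `l - 1`
squares, at least two unless `l = 2`, so `2s + 1 ≤ n + t` and `s - t ≤ ⌊(n - 1)/2⌋`. Lists of 3s
(plus a 4, or a single 2 at an end, where it costs `g = -f`) attain the bound.
-/

lemma List.mem_of_getD_eq {α : Type*} {L : List α} {d a : α} {j : ℕ}
    (hj : L.getD j d = a) (had : a ≠ d) : a ∈ L := by
  by_cases hlt : j < L.length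
  · rw [List.getD_eq_getElem _ _ hlt] at hj
    exact hj ▸ L.getElem_mem hlt
  · rw [List.getD_eq_default _ _ (not_lt.mp hlt)] at hj
    exact absurd hj.symm had

lemma card_filter_getD_eq_count (L : List ℕ) (a : ℕ) :
    ((Finset.range L.length).filter (fun j => L.getD j 0 = a)).card = L.count a := by
  induction L with
  | nil => simp
  | cons b t ih =>
    rw [Finset.card_filter] at ih ⊢
    rw [List.length_cons, Finset.sum_range_succ', List.count_cons]
    simp only [List.getD_cons_succ, List.getD_cons_zero, ih, beq_iff_eq]

lemma e2_add_i2 (L : List ℕ) : e2 L + i2 L = L.count 2 := by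
  rw [e2, i2, ← Finset.card_union_of_disjoint, ← card_filter_getD_eq_count]
  · congr 1
    ext j
    simp only [Finset.mem_union, Finset.mem_filter]
    tauto
  · simp only [Finset.disjoint_left, Finset.mem_filter]
    rintro j ⟨-, hend, -⟩ ⟨-, hne0, hnelast, -⟩
    tauto

lemma i2_cons_of_two_not_mem {a : ℕ} {t : List ℕ} (ht : 2 ∉ t) : i2 (a :: t) = 0 := by
  rw [i2, Finset.card_eq_zero, Finset.filter_eq_empty_iff]
  rintro (_ | j) - ⟨h0, -, hj⟩
  · exact h0 rfl
  · exact ht (List.mem_of_getD_eq hj (by norm_num))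

lemma three_mul_length_le_sum_add_count {L : List ℕ} (hL : ∀ l ∈ L, 2 ≤ l) :
    3 * L.length ≤ L.sum + L.count 2 := by
  induction L with
  | nil => simp
  | cons a t ih =>
    simp only [List.forall_mem_cons] at hL
    have htail := ih hL.2
    simp only [List.length_cons, List.sum_cons, List.count_cons, beq_iff_eq]
    split_ifs <;> omega

lemma two_mul_length_lt_nSq_add_count {L : List ℕ} (hL : LengthVector L) :
    2 * L.length < nSq L + L.count 2 := by
  have hsum := three_mul_length_le_sum_add_count hL.2
  have hcount := L.count_le_length (a := 2)
  have hpos := List.length_pos_iff.mpr hL.1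
  unfold nSq
  omega

lemma f_add_h (α : ℝ) : f α + h α = (8:ℝ) ^ α - (6:ℝ) ^ α := by
  unfold f h; ring

lemma f_add_h_neg {α : ℝ} (hα : α < 0) : f α + h α < 0 := by
  rw [f_add_h, sub_neg]
  exact Real.rpow_lt_rpow_of_neg (by norm_num) (by norm_num) hα

lemma psi_le_of_h_le_g {α : ℝ} (hhg : h α ≤ g α) (L : List ℕ) :
    psi α L ≤ f α * L.length + g α * L.count 2 := by
  rw [psi, ← e2_add_i2]
  push_cast
  linarith [mul_le_mul_of_nonneg_right hhg (Nat.cast_nonneg (α := ℝ) (i2 L))]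

lemma psi_of_two_not_mem (α : ℝ) {L : List ℕ} (hL : 2 ∉ L) : psi α L = f α * L.length := by
  have hcount := e2_add_i2 L
  rw [List.count_eq_zero.mpr hL] at hcount
  rw [psi, Nat.eq_zero_of_add_eq_zero_right hcount, Nat.eq_zero_of_add_eq_zero_left hcount]
  simp

lemma psi_two_cons (α : ℝ) {t : List ℕ} (ht : 2 ∉ t) :
    psi α (2 :: t) = f α * (t.length + 1) + g α := by
  have hcount := e2_add_i2 (2 :: t)
  rw [i2_cons_of_two_not_mem ht, List.count_cons_self, List.count_eq_zero.mpr ht] at hcount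
  rw [psi, show e2 (2 :: t) = 1 by omega, i2_cons_of_two_not_mem ht]
  simp

/-- Proposition 4, second part: if α < 0, f(α) > 0 and f(α) + g(α) = 0, then
every length vector with square count n ≥ 3 satisfies Ψ_α(L) ≤ f(α)·⌊(n−1)/2⌋,
and the bound is attained: by (3,…,3) with (n−1)/2 entries when n is odd, and
both by (4,3,…,3) with (n−2)/2 entries and by (2,3,…,3) with n/2 entries when
n is even. -/
theorem psi_le_at_root_fg (α : ℝ) (hα : α < 0) (hf : 0 < f α) (hfg : f α + g α = 0)
    (n : ℕ) (hn3 : 3 ≤ n) :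
    (∀ L : List ℕ, LengthVector L → nSq L = n →
      psi α L ≤ f α * (((n - 1) / 2 : ℕ) : ℝ)) ∧
    (Odd n → psi α (List.replicate ((n - 1) / 2) 3) = f α * (((n - 1) / 2 : ℕ) : ℝ)) ∧
    (Even n →
      psi α (4 :: List.replicate ((n - 4) / 2) 3) = f α * (((n - 1) / 2 : ℕ) : ℝ) ∧
      psi α (2 :: List.replicate (n / 2 - 1) 3) = f α * (((n - 1) / 2 : ℕ) : ℝ)) := by
  have hg : g α = -f α := by linarith
  have hhg : h α ≤ g α := by linarith [f_add_h_neg hα]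
  have hthrees : ∀ k, 2 ∉ List.replicate k 3 := fun k => by simp [List.mem_replicate]
  refine ⟨fun L hL hn => ?_, fun _ => ?_, fun heven => ⟨?_, ?_⟩⟩
  · have hlen : L.length ≤ (n - 1) / 2 + L.count 2 := by
      have := two_mul_length_lt_nSq_add_count hL; omega
    have hlen' : (L.length : ℝ) - L.count 2 ≤ ((n - 1) / 2 : ℕ) := by
      rw [sub_le_iff_le_add]; exact_mod_cast hlen
    calc psi α L ≤ f α * L.length + g α * L.count 2 := psi_le_of_h_le_g hhg L
      _ = f α * (L.length - L.count 2) := by rw [hg]; ring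
      _ ≤ _ := mul_le_mul_of_nonneg_left hlen' hf.le
  · rw [psi_of_two_not_mem α (hthrees _), List.length_replicate]
  · have h4 : 2 ∉ 4 :: List.replicate ((n - 4) / 2) 3 := by simp [hthrees]
    have := heven.two_dvd
    rw [psi_of_two_not_mem α h4, List.length_cons, List.length_replicate]
    congr 2
    omega
  · have := heven.two_dvd
    rw [psi_two_cons α (hthrees _), List.length_replicate, hg]
    have hk : (n - 1) / 2 = n / 2 - 1 := by omega
    have hk1 : 1 ≤ n / 2 := by omega
    rw [hk]; push_cast [hk1]; ring
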